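/- Let λ ∈ (0,1) and θ ∈ (0,∞) with θ ≠ 1/2 and θ ≠ 1. Let c be the unique zero of f(c) = (c/((2θ−1+2cθ)(2−2θ−c(2θ−1))))^((1−θ)/(θ−1/2)) − (2θ−1+2cθ)²/(1−λ) in I(θ), set s̄ = (c/((2θ−1+2cθ)(2−2θ−c(2θ−1))))^(1/(2θ−1)), and define g(s) = (−cs + (2θ−1+2cθ)s^(2θ))/(s − (2−2θ−c(2θ−1))s^(2θ)). Then g is twice differentiable on the closed interval with endpoints 1 and s̄ and satisfies there the ordinary differential equation g''(s) = 2·g'(s)²/(c + g(s)) − 2θ·g'(s)/s. -/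

import Mathlib

open Real

/-- The interval `I(θ)` in which the root `c` of `f` is located. -/
noncomputable def noTradeInterval (θ : ℝ) : Set ℝ :=
  if θ < 1/2 then Set.Ioi ((1 - θ)/θ)
  else if θ < 1 then Set.Ioo ((1 - θ)/θ) ((1 - θ)/(θ - 1/2))
  else Set.Ioo ((1 - θ)/θ) 0

/-!
Write `g = (-c s + a s^p) / D(s)` with `D(s) = s - b s^p`, `p = 2θ`. Then
`g' = (p - 1)(a - c b) s^p / D²` and `c + g = (a - c b) s^p / D`, and the ODE is an algebraic
identity wherever `s > 0` and `D(s) ≠ 0`. Since `D(s) = s (1 - b s^(2θ-1))` and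
`b s̄^(2θ-1) = c / a`, on the interval between `1` and `s̄` the monotone quantity `b s^(2θ-1)`
stays between `b` and `c / a`, which for `c ∈ I(θ)` lie strictly on the same side of `1`.
-/

open Set Filter Topology

noncomputable def shadowPrice (p c a b x : ℝ) : ℝ :=
  (-c * x + a * x ^ p) / (x - b * x ^ p)

section ShadowPrice

variable {p c a b x : ℝ}

theorem hasDerivAt_sub_mul_rpow (hx : 0 < x) :
    HasDerivAt (fun y => y - b * y ^ p) (1 - b * (p * x ^ (p - 1))) x :=
  (hasDerivAt_id x).sub ((hasDerivAt_rpow_const (Or.inl hx.ne')).const_mul b)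

theorem hasDerivAt_shadowPrice (hx : 0 < x) (hD : x - b * x ^ p ≠ 0) :
    HasDerivAt (shadowPrice p c a b) ((p - 1) * (a - c * b) * x ^ p / (x - b * x ^ p) ^ 2) x := by
  have hnum : HasDerivAt (fun y => -c * y + a * y ^ p) (-c * 1 + a * (p * x ^ (p - 1))) x :=
    ((hasDerivAt_id' x).const_mul (-c)).add
      ((hasDerivAt_rpow_const (Or.inl hx.ne')).const_mul a)
  refine (hnum.fun_div (hasDerivAt_sub_mul_rpow hx) hD).congr_deriv ?_
  rw [rpow_sub_one hx.ne']
  field_simp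
  ring

theorem deriv_shadowPrice_eventuallyEq (hx : 0 < x) (hD : x - b * x ^ p ≠ 0) :
    deriv (shadowPrice p c a b) =ᶠ[𝓝 x]
      fun y => (p - 1) * (a - c * b) * y ^ p / (y - b * y ^ p) ^ 2 :=
  ((eventually_gt_nhds hx).and ((hasDerivAt_sub_mul_rpow hx).continuousAt.eventually_ne hD)).mono
    fun _ hy => (hasDerivAt_shadowPrice hy.1 hy.2).deriv

theorem add_shadowPrice (hD : x - b * x ^ p ≠ 0) :
    c + shadowPrice p c a b x = (a - c * b) * x ^ p / (x - b * x ^ p) := by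
  rw [shadowPrice, eq_div_iff hD, add_mul, div_mul_cancel₀ _ hD]
  ring

theorem shadowPrice_ode (hx : 0 < x) (hD : x - b * x ^ p ≠ 0) :
    DifferentiableAt ℝ (shadowPrice p c a b) x ∧
      DifferentiableAt ℝ (deriv (shadowPrice p c a b)) x ∧
        deriv (deriv (shadowPrice p c a b)) x =
          2 * (deriv (shadowPrice p c a b) x) ^ 2 / (c + shadowPrice p c a b x)
            - p * deriv (shadowPrice p c a b) x / x := by
  have hderiv := deriv_shadowPrice_eventuallyEq (c := c) (a := a) hx hD
  have hsecond := ((hasDerivAt_rpow_const (p := p) (Or.inl hx.ne')).const_mul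
    ((p - 1) * (a - c * b))).fun_div ((hasDerivAt_sub_mul_rpow hx).fun_pow 2) (pow_ne_zero 2 hD)
  refine ⟨(hasDerivAt_shadowPrice hx hD).differentiableAt,
    hderiv.differentiableAt_iff.mpr hsecond.differentiableAt, ?_⟩
  rw [hderiv.deriv_eq, hsecond.deriv, (hasDerivAt_shadowPrice hx hD).deriv, add_shadowPrice hD,
    rpow_sub_one hx.ne']
  -- for `a = c b` the function is the constant `-c`, and both sides vanish since `_ / 0 = 0`
  by_cases hM : a - c * b = 0
  · simp [hM]
  field_simp
  ring

end ShadowPrice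

theorem rpow_mem_uIcc {s t x : ℝ} (q : ℝ) (hs : 0 < s) (ht : 0 < t) (hx : x ∈ uIcc s t) :
    x ^ q ∈ uIcc (s ^ q) (t ^ q) := by
  have hpos : uIcc s t ⊆ Ioi 0 := fun y hy => (lt_min hs ht).trans_le hy.1
  rcases le_total 0 q with hq | hq
  · exact ((monotoneOn_rpow_Ici_of_exponent_nonneg hq).mono
      fun y hy => mem_Ici.mpr (hpos hy).le).mapsTo_uIcc hx
  · exact ((antitoneOn_rpow_Ioi_of_exponent_nonpos hq).mono hpos).mapsTo_uIcc hx

theorem sub_mul_rpow_ne_zero_of_mem_uIcc {b p t x : ℝ} (ht : 0 < t) (hx : x ∈ uIcc 1 t)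
    (hone : (1 : ℝ) ∉ uIcc b (b * t ^ (p - 1))) : x - b * x ^ p ≠ 0 := by
  have hx0 : 0 < x := (lt_min one_pos ht).trans_le hx.1
  have hmem : b * x ^ (p - 1) ∈ uIcc b (b * t ^ (p - 1)) := by
    simpa [image_const_mul_uIcc] using
      mem_image_of_mem (b * ·) (rpow_mem_uIcc (p - 1) one_pos ht hx)
  have hfactor : x - b * x ^ p = x * (1 - b * x ^ (p - 1)) := by
    rw [rpow_sub_one hx0.ne']
    field_simp
  rw [hfactor]
  exact mul_ne_zero hx0.ne' (sub_ne_zero.mpr fun h => hone (by rwa [← h] at hmem))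

section NoTradeInterval

variable {θ c : ℝ}

theorem lt_of_mem_noTradeInterval (hc : c ∈ noTradeInterval θ) : (1 - θ) / θ < c := by
  unfold noTradeInterval at hc
  split_ifs at hc
  exacts [hc, hc.1, hc.1]

theorem div_mul_pos_of_mem_noTradeInterval (hθ : 0 < θ) (hθhalf : θ ≠ 1/2) (hθone : θ ≠ 1)
    (hc : c ∈ noTradeInterval θ) :
    0 < c / ((2*θ - 1 + 2*c*θ) * (2 - 2*θ - c*(2*θ - 1))) := by
  have hlow : 1 - θ < c * θ := (div_lt_iff₀ hθ).mp (lt_of_mem_noTradeInterval hc)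
  have ha : 0 < 2*θ - 1 + 2*c*θ := by linarith
  unfold noTradeInterval at hc
  split_ifs at hc with h₁ h₂
  · have hc0 : 0 < c := by nlinarith
    exact div_pos hc0 (mul_pos ha (by nlinarith))
  · have hθ' : 1/2 < θ := (not_lt.mp h₁).lt_of_ne' hθhalf
    have hup : c * (θ - 1/2) < 1 - θ := (lt_div_iff₀ (by linarith)).mp hc.2
    have hc0 : 0 < c := by nlinarith
    exact div_pos hc0 (mul_pos ha (by nlinarith))
  · have hθ' : 1 < θ := (not_lt.mp h₂).lt_of_ne' hθone
    exact div_pos_of_neg_of_neg hc.2 (mul_neg_of_pos_of_neg ha (by nlinarith))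

theorem one_notMem_uIcc_of_mem_noTradeInterval (hθ : 0 < θ) (hθhalf : θ ≠ 1/2)
    (hc : c ∈ noTradeInterval θ) :
    (1 : ℝ) ∉ uIcc (2 - 2*θ - c*(2*θ - 1)) (c / (2*θ - 1 + 2*c*θ)) := by
  have hlow : 1 - θ < c * θ := (div_lt_iff₀ hθ).mp (lt_of_mem_noTradeInterval hc)
  have ha : 0 < 2*θ - 1 + 2*c*θ := by linarith
  have hc1 : 0 < 1 + c := by nlinarith
  -- both endpoints minus one equal (1 - 2θ)(1 + c), up to the positive factor 1/a for the second
  rcases (sub_ne_zero.mpr hθhalf).lt_or_gt with h | h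
  · exact notMem_uIcc_of_lt (by nlinarith) ((one_lt_div ha).mpr (by nlinarith))
  · exact notMem_uIcc_of_gt (by nlinarith) ((div_lt_one ha).mpr (by nlinarith))

end NoTradeInterval

theorem growth_optimal_g_ode
    (θ c sbar : ℝ) (g : ℝ → ℝ)
    (hθ : 0 < θ) (hθhalf : θ ≠ 1/2) (hθone : θ ≠ 1)
    (hcI : c ∈ noTradeInterval θ)
    (hsbar : sbar = (c / ((2*θ - 1 + 2*c*θ) * (2 - 2*θ - c*(2*θ - 1)))) ^ (1/(2*θ - 1)))
    (hg : ∀ s : ℝ, g s = (-c*s + (2*θ - 1 + 2*c*θ) * s ^ (2*θ))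
        / (s - (2 - 2*θ - c*(2*θ - 1)) * s ^ (2*θ))) :
    ∀ s ∈ Set.uIcc (1:ℝ) sbar,
      DifferentiableAt ℝ g s ∧ DifferentiableAt ℝ (deriv g) s ∧
        deriv (deriv g) s = 2 * (deriv g s)^2 / (c + g s) - 2*θ * deriv g s / s := by
  have hr := div_mul_pos_of_mem_noTradeInterval hθ hθhalf hθone hcI
  have hq : 2*θ - 1 ≠ 0 := fun h => hθhalf (by linarith)
  set a := 2*θ - 1 + 2*c*θ
  set b := 2 - 2*θ - c*(2*θ - 1)
  have hab : a * b ≠ 0 := fun h => hr.ne' (by rw [h, div_zero])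
  have hsbar_pos : 0 < sbar := hsbar ▸ rpow_pos_of_pos hr _
  have hb_sbar_pow : b * sbar ^ (2*θ - 1) = c / a := by
    rw [hsbar, ← rpow_mul hr.le, one_div_mul_cancel hq, rpow_one]
    field_simp [left_ne_zero_of_mul hab, right_ne_zero_of_mul hab]
  have hone : (1 : ℝ) ∉ uIcc b (b * sbar ^ (2*θ - 1)) :=
    hb_sbar_pow ▸ one_notMem_uIcc_of_mem_noTradeInterval hθ hθhalf hcI
  obtain rfl : g = shadowPrice (2*θ) c a b := funext hg
  intro s hs
  exact shadowPrice_ode ((lt_min one_pos hsbar_pos).trans_le hs.1)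
    (sub_mul_rpow_ne_zero_of_mem_uIcc hsbar_pos hs hone)
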